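/- Let d ≥ 1, M ≥ 2, let p, p_1, …, p_M ∈ ℝ^d with p ≠ p_m for all m, and let c > 0. Define τ_m = ‖p − p_m‖₂/c, the delay-gradient vectors g_i ∈ ℝ^M by [g_i]_m = (p_i − [p_m]_i)/(c‖p − p_m‖₂), the centering projection P = I_M − (1/M)𝟙𝟙ᵀ, the geometry matrix G ∈ ℝ^{d×d} by G_{ij} = (P g_i)ᵀ(P g_j), and for f ∈ ℝ the steering vector v(f) ∈ ℂ^M with [v(f)]_m = exp(−2πℹ f τ_m). Fix 0 < f_L < f_H, S_L > S_H > 0, N₀ > 0, and per-band gains B_L, B_H > 0 and a water level λ ≥ 0; for b ∈ {L, H} set S_{w,b} = B_b² N₀ + λ B_b (assumed > 0), γ_b = S_b B_b²/S_{w,b}, w_b = 2Mγ_b²/(1 + Mγ_b), and for f with |f| ≤ f_L set S(f) = S_L B_L² v(f)v(f)* + S_{w,L} I_M, S'_i(f) = 2πℹ f S_L B_L² (v(f)v(f)* D_i − D_i v(f)v(f)*), while for f with f_L < |f| ≤ f_H set S(f) = S_H B_H² v(f)v(f)* + S_{w,H} I_M, S'_i(f) = 2πℹ f S_H B_H² (v(f)v(f)*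 D_i − D_i v(f)v(f)*), where D_i = diag(g_i). Then for all 1 ≤ i, j ≤ d: (1/2)∫_{−f_H}^{f_H} tr(S(f)^{-1} S'_i(f) S(f)^{-1} S'_j(f)) df = (4π²/3)·(f_L³ w_L + (f_H³ − f_L³) w_H)·G_{ij}. -/

import Mathlib

open Matrix Real

/-!
On a band write `Q = v vᴴ`, `J = 𝟙𝟙ᵀ` and `S = a Q + s I`. The entries of `v` have modulus one, so
`Q = U J U⁻¹` with `U = diag v`, and `U` commutes with every `D_i`: conjugating by `U` reduces the
trace to the case `v = 𝟙`. There `J² = M J` gives `(a J + s I)⁻¹ = s⁻¹ (I - a / (s + a M) J)`, and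
multiplying out the rank-one products gives
`tr (S⁻¹ (c [Q, D_x]) S⁻¹ (c [Q, D_y])) = 2 c² (Σx Σy - M x ⬝ y) / (s (s + a M))`.
With `c = 2πi f a` this is `4π² w G f²`, so the integrand is a band-wise constant times `f²`.
-/

namespace Matrix

theorem vecMulVec_one_one_mul_self {n R : Type*} [Fintype n] [CommRing R] :
    (vecMulVec 1 1 : Matrix n n R) * vecMulVec 1 1 = (Fintype.card n : R) • vecMulVec 1 1 := by
  rw [vecMulVec_mul_vecMulVec, one_dotProduct_one, vecMulVec_smul]

variable {n : Type*} [Fintype n] [DecidableEq n]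

section CommRing

variable {R : Type*} [CommRing R]

theorem vecMulVec_one_one_mul_diagonal (x : n → R) :
    vecMulVec 1 1 * diagonal x = vecMulVec 1 x := by
  ext i j
  simp [vecMulVec_apply]

theorem diagonal_mul_vecMulVec_one_one (x : n → R) :
    diagonal x * vecMulVec 1 1 = vecMulVec x 1 := by
  ext i j
  simp [vecMulVec_apply]

theorem trace_sub_smul_vecMulVec_one_one_mul_commutator (x y : n → R) (β : R) :
    trace ((1 - β • vecMulVec 1 1) * (vecMulVec 1 1 * diagonal x - diagonal x * vecMulVec 1 1) *
        (1 - β • vecMulVec 1 1) * (vecMulVec 1 1 * diagonal y - diagonal y * vecMulVec 1 1))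
      = 2 * (1 - β * Fintype.card n) * ((∑ m, x m) * (∑ m, y m) - Fintype.card n * x ⬝ᵥ y) := by
  simp only [vecMulVec_one_one_mul_diagonal, diagonal_mul_vecMulVec_one_one, sub_mul, mul_sub,
    one_mul, mul_one, Matrix.smul_mul, Matrix.mul_smul, vecMulVec_mul_vecMulVec, vecMulVec_smul,
    trace_sub, trace_smul, trace_vecMulVec, smul_eq_mul, one_dotProduct, dotProduct_one,
    Pi.one_apply, Finset.sum_const, Finset.card_univ, nsmul_one]
  ring

theorem conj_mul_conj_of_mul_eq_one {W W' : Matrix n n R} (h : W' * W = 1) (A B : Matrix n n R) :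
    W * A * W' * (W * B * W') = W * (A * B) * W' := by
  simp only [Matrix.mul_assoc, ← Matrix.mul_assoc W' W, h, Matrix.one_mul]

theorem trace_conj_of_mul_eq_one {W W' : Matrix n n R} (h : W' * W = 1) (A : Matrix n n R) :
    trace (W * A * W') = trace A := by
  rw [trace_mul_comm, ← Matrix.mul_assoc, h, Matrix.one_mul]

theorem inv_conj_of_mul_eq_one {W W' : Matrix n n R} (h : W' * W = 1) (A : Matrix n n R) :
    (W * A * W')⁻¹ = W * A⁻¹ * W' := by
  rw [mul_inv_rev, mul_inv_rev, inv_eq_left_inv h, inv_eq_left_inv (mul_eq_one_comm.mp h),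
    Matrix.mul_assoc]

theorem vecMulVec_eq_diagonal_mul_mul_diagonal (u u' : n → R) :
    vecMulVec u u' = diagonal u * vecMulVec 1 1 * diagonal u' := by
  ext i j
  simp [vecMulVec_apply]

theorem commutator_vecMulVec_diagonal (u u' x : n → R) :
    vecMulVec u u' * diagonal x - diagonal x * vecMulVec u u'
      = diagonal u * (vecMulVec 1 1 * diagonal x - diagonal x * vecMulVec 1 1) * diagonal u' := by
  simp only [vecMulVec_eq_diagonal_mul_mul_diagonal u u', Matrix.mul_sub, Matrix.sub_mul,
    Matrix.mul_assoc, (commute_diagonal u' x).eq]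
  rw [← Matrix.mul_assoc (diagonal x), (commute_diagonal x u).eq, Matrix.mul_assoc]

theorem diagonal_mul_diagonal_eq_one {u u' : n → R} (h : u' * u = 1) :
    diagonal u' * diagonal u = 1 := by
  rw [diagonal_mul_diagonal, ← diagonal_one]
  exact congrArg diagonal h

theorem smul_vecMulVec_add_smul_one {u u' : n → R} (hu : u' * u = 1) (a s : R) :
    a • vecMulVec u u' + s • 1 = diagonal u * (a • vecMulVec 1 1 + s • 1) * diagonal u' := by
  rw [Matrix.mul_add, Matrix.add_mul, Matrix.mul_smul, Matrix.smul_mul, Matrix.mul_smul,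
    Matrix.smul_mul, Matrix.mul_one, diagonal_mul_diagonal_eq_one ((mul_comm u u').trans hu),
    ← vecMulVec_eq_diagonal_mul_mul_diagonal]

end CommRing

section Field

variable {𝕜 : Type*} [Field 𝕜]

theorem inv_smul_vecMulVec_one_one_add_smul_one {a s : 𝕜} (hs : s ≠ 0)
    (hsa : s + a * Fintype.card n ≠ 0) :
    (a • vecMulVec 1 1 + s • 1 : Matrix n n 𝕜)⁻¹
      = s⁻¹ • (1 - (a / (s + a * Fintype.card n)) • vecMulVec 1 1) := by
  apply inv_eq_right_inv
  simp only [smul_sub, mul_sub, add_mul, Matrix.mul_smul, Matrix.smul_mul, smul_smul,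
    Matrix.one_mul, Matrix.mul_one, vecMulVec_one_one_mul_self]
  match_scalars
  · field_simp
    ring
  · field_simp

theorem trace_inv_mul_commutator_vecMulVec {u u' : n → 𝕜} (hu : u' * u = 1) (x y : n → 𝕜)
    {a s : 𝕜} (hs : s ≠ 0) (hsa : s + a * Fintype.card n ≠ 0) (c₁ c₂ : 𝕜) :
    trace ((a • vecMulVec u u' + s • 1)⁻¹ *
          (c₁ • (vecMulVec u u' * diagonal x - diagonal x * vecMulVec u u')) *
        (a • vecMulVec u u' + s • 1)⁻¹ *
          (c₂ • (vecMulVec u u' * diagonal y - diagonal y * vecMulVec u u')))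
      = c₁ * c₂ * (2 / (s * (s + a * Fintype.card n)))
          * ((∑ m, x m) * (∑ m, y m) - Fintype.card n * x ⬝ᵥ y) := by
  have hU := diagonal_mul_diagonal_eq_one hu
  simp only [Matrix.smul_mul, Matrix.mul_smul, trace_smul, smul_smul, smul_eq_mul]
  rw [smul_vecMulVec_add_smul_one hu, commutator_vecMulVec_diagonal u u' x,
    commutator_vecMulVec_diagonal u u' y, inv_conj_of_mul_eq_one hU,
    conj_mul_conj_of_mul_eq_one hU, conj_mul_conj_of_mul_eq_one hU,
    conj_mul_conj_of_mul_eq_one hU, trace_conj_of_mul_eq_one hU,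
    inv_smul_vecMulVec_one_one_add_smul_one hs hsa]
  simp only [Matrix.smul_mul, Matrix.mul_smul, trace_smul, smul_eq_mul]
  rw [trace_sub_smul_vecMulVec_one_one_mul_commutator]
  field_simp
  ring

theorem centering_mulVec_dotProduct [CharZero 𝕜] [Nonempty n] (x y : n → 𝕜) :
    (1 - (Fintype.card n : 𝕜)⁻¹ • vecMulVec 1 1 : Matrix n n 𝕜) *ᵥ x ⬝ᵥ
        (1 - (Fintype.card n : 𝕜)⁻¹ • vecMulVec 1 1 : Matrix n n 𝕜) *ᵥ y
      = x ⬝ᵥ y - (∑ m, x m) * (∑ m, y m) / Fintype.card n := by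
  have hcenter : ∀ z : n → 𝕜, (1 - (Fintype.card n : 𝕜)⁻¹ • vecMulVec 1 1 : Matrix n n 𝕜) *ᵥ z
      = z - ((Fintype.card n : 𝕜)⁻¹ * ∑ m, z m) • 1 := fun z => by
    ext i
    simp [mulVec, dotProduct, sub_mul, Finset.sum_sub_distrib, one_apply, Finset.mul_sum]
  rw [hcenter, hcenter]
  simp only [sub_dotProduct, dotProduct_sub, smul_dotProduct, dotProduct_smul, smul_eq_mul]
  rw [one_dotProduct_one, one_dotProduct, dotProduct_one]
  field_simp
  ring

end Field

end Matrix

theorem star_mul_self_eq_one_of_norm_eq_one {n : Type*} {u : n → ℂ} (hu : ∀ m, ‖u m‖ = 1) :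
    star u * u = 1 :=
  funext fun m => by simp [Complex.conj_mul', hu]

theorem trace_whittle_band {n : Type*} [Fintype n] [DecidableEq n] [Nonempty n] {u : n → ℂ}
    (hu : star u * u = 1) (x y : n → ℝ) {a s : ℝ} (ha : 0 ≤ a) (hs : 0 < s) (f : ℝ) :
    trace (((a : ℂ) • vecMulVec u (star u) + (s : ℂ) • 1)⁻¹ *
          ((2 * π * Complex.I * f * a) • (vecMulVec u (star u) * diagonal (fun m => (x m : ℂ))
            - diagonal (fun m => (x m : ℂ)) * vecMulVec u (star u))) *
        ((a : ℂ) • vecMulVec u (star u) + (s : ℂ) • 1)⁻¹ *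
          ((2 * π * Complex.I * f * a) • (vecMulVec u (star u) * diagonal (fun m => (y m : ℂ))
            - diagonal (fun m => (y m : ℂ)) * vecMulVec u (star u))))
      = ((4 * π ^ 2
            * (2 * Fintype.card n * (a / s) ^ 2 / (1 + Fintype.card n * (a / s)))
            * (x ⬝ᵥ y - (∑ m, x m) * (∑ m, y m) / Fintype.card n) * f ^ 2 : ℝ) : ℂ) := by
  have hn : (0 : ℝ) < Fintype.card n := by exact_mod_cast Fintype.card_pos
  have hsa : (0 : ℝ) < s + a * Fintype.card n := by positivity
  have hc : (2 * π * Complex.I * f * a) * (2 * π * Complex.I * f * a)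
      = -((2 * π * f * a : ℝ) : ℂ) ^ 2 := by
    push_cast
    linear_combination (2 * π * f * a : ℂ) ^ 2 * Complex.I_sq
  have hreal : -(2 * π * f * a) ^ 2 * (2 / (s * (s + a * Fintype.card n)))
        * ((∑ m, x m) * (∑ m, y m) - Fintype.card n * x ⬝ᵥ y)
      = 4 * π ^ 2 * (2 * Fintype.card n * (a / s) ^ 2 / (1 + Fintype.card n * (a / s)))
        * (x ⬝ᵥ y - (∑ m, x m) * (∑ m, y m) / Fintype.card n) * f ^ 2 := by
    field_simp
    ring
  rw [trace_inv_mul_commutator_vecMulVec hu _ _ (by exact_mod_cast hs.ne')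
    (by exact_mod_cast hsa.ne'), hc, ← hreal]
  simp only [dotProduct]
  push_cast
  ring

theorem intervalIntegrable_and_integral_eq_of_eqOn_mul_sq {F : ℝ → ℂ} {a b C : ℝ} (hab : a ≤ b)
    (hF : Set.EqOn F (fun x => ((C * x ^ 2 : ℝ) : ℂ)) (Set.Ioo a b)) :
    IntervalIntegrable F MeasureTheory.volume a b ∧
      ∫ x in a..b, F x = ((C * (b ^ 3 - a ^ 3) / 3 : ℝ) : ℂ) := by
  have hF' : Set.EqOn F (fun x => ((C * x ^ 2 : ℝ) : ℂ)) (Set.uIoo a b) := by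
    rwa [Set.uIoo_of_le hab]
  refine ⟨(intervalIntegrable_congr_uIoo hF').mpr
    ((by fun_prop : Continuous fun x : ℝ => ((C * x ^ 2 : ℝ) : ℂ)).intervalIntegrable a b), ?_⟩
  rw [intervalIntegral.integral_congr_Ioo_of_le hab hF, intervalIntegral.integral_ofReal,
    intervalIntegral.integral_const_mul, integral_pow]
  push_cast
  ring

theorem integral_eq_of_eqOn_two_band_mul_sq {F : ℝ → ℂ} {fL fH CL CH : ℝ} (hfL : 0 ≤ fL)
    (hfLH : fL ≤ fH) (hlow : ∀ f, |f| < fL → F f = ((CL * f ^ 2 : ℝ) : ℂ))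
    (hhigh : ∀ f, fL < |f| → |f| ≤ fH → F f = ((CH * f ^ 2 : ℝ) : ℂ)) :
    ∫ f in (-fH)..fH, F f = ((2 * (CL * fL ^ 3 + CH * (fH ^ 3 - fL ^ 3)) / 3 : ℝ) : ℂ) := by
  obtain ⟨hint₁, heq₁⟩ := intervalIntegrable_and_integral_eq_of_eqOn_mul_sq (by linarith)
    fun f (hf : f ∈ Set.Ioo (-fH) (-fL)) => hhigh f
      (by rw [abs_of_neg (by linarith [hf.2])]; linarith [hf.2])
      (by rw [abs_of_neg (by linarith [hf.2])]; linarith [hf.1])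
  obtain ⟨hint₂, heq₂⟩ := intervalIntegrable_and_integral_eq_of_eqOn_mul_sq (by linarith)
    fun f (hf : f ∈ Set.Ioo (-fL) fL) => hlow f (abs_lt.mpr hf)
  obtain ⟨hint₃, heq₃⟩ := intervalIntegrable_and_integral_eq_of_eqOn_mul_sq hfLH
    fun f (hf : f ∈ Set.Ioo fL fH) => hhigh f
      (by rw [abs_of_nonneg (by linarith [hf.1])]; exact hf.1)
      (by rw [abs_of_nonneg (by linarith [hf.1])]; exact hf.2.le)
  rw [← intervalIntegral.integral_add_adjacent_intervals hint₁ (hint₂.trans hint₃),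
    ← intervalIntegral.integral_add_adjacent_intervals hint₂ hint₃, heq₁, heq₂, heq₃]
  push_cast
  ring

theorem two_band_whittle_FI_rate_general
    (d M : ℕ) (hM : 2 ≤ M)
    (τ : Fin M → ℝ)
    (g : Fin d → Fin M → ℝ)
    (P : Matrix (Fin M) (Fin M) ℝ)
    (hP : P = (1 : Matrix (Fin M) (Fin M) ℝ) - ((M : ℝ))⁻¹ • vecMulVec 1 1)
    (G : Fin d → Fin d → ℝ)
    (hG : ∀ i j, G i j = P.mulVec (g i) ⬝ᵥ P.mulVec (g j))
    (v : ℝ → Fin M → ℂ)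
    (hv : ∀ f m, v f m = Complex.exp (-(2 * π * Complex.I * f * τ m)))
    (fL fH SL SH BL BH : ℝ)
    (hfL : 0 < fL) (hfLH : fL < fH)
    (hSH : 0 < SH) (hSLH : SH < SL)
    (SwL SwH : ℝ)
    (hSwLpos : 0 < SwL)
    (hSwHpos : 0 < SwH)
    (γL γH : ℝ) (hγL : γL = SL * BL ^ 2 / SwL) (hγH : γH = SH * BH ^ 2 / SwH)
    (wL wH : ℝ)
    (hwL : wL = 2 * M * γL ^ 2 / (1 + M * γL))
    (hwH : wH = 2 * M * γH ^ 2 / (1 + M * γH))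
    (D : Fin d → Matrix (Fin M) (Fin M) ℂ)
    (hD : ∀ i, D i = Matrix.diagonal fun m => (g i m : ℂ))
    (S : ℝ → Matrix (Fin M) (Fin M) ℂ)
    (S' : Fin d → ℝ → Matrix (Fin M) (Fin M) ℂ)
    (hSlow : ∀ f : ℝ, |f| ≤ fL →
      S f = ((SL * BL ^ 2 : ℝ) : ℂ) • vecMulVec (v f) (star (v f))
        + ((SwL : ℝ) : ℂ) • (1 : Matrix (Fin M) (Fin M) ℂ))
    (hShigh : ∀ f : ℝ, fL < |f| → |f| ≤ fH →
      S f = ((SH * BH ^ 2 : ℝ) : ℂ) • vecMulVec (v f) (star (v f))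
        + ((SwH : ℝ) : ℂ) • (1 : Matrix (Fin M) (Fin M) ℂ))
    (hS'low : ∀ (i : Fin d) (f : ℝ), |f| ≤ fL →
      S' i f = (2 * π * Complex.I * f * (SL * BL ^ 2)) •
        (vecMulVec (v f) (star (v f)) * D i - D i * vecMulVec (v f) (star (v f))))
    (hS'high : ∀ (i : Fin d) (f : ℝ), fL < |f| → |f| ≤ fH →
      S' i f = (2 * π * Complex.I * f * (SH * BH ^ 2)) •
        (vecMulVec (v f) (star (v f)) * D i - D i * vecMulVec (v f) (star (v f)))) :
    ∀ i j : Fin d,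
      (1 / 2 : ℂ) * ∫ f in (-fH)..fH,
          Matrix.trace ((S f)⁻¹ * S' i f * (S f)⁻¹ * S' j f)
        = (((4 * π ^ 2 / 3) * (fL ^ 3 * wL + (fH ^ 3 - fL ^ 3) * wH) * G i j : ℝ) : ℂ) := by
  intro i j
  have : Nonempty (Fin M) := ⟨⟨0, by omega⟩⟩
  have hv1 : ∀ f, star (v f) * v f = 1 := fun f =>
    star_mul_self_eq_one_of_norm_eq_one fun m => by simp [hv, Complex.norm_exp]
  have hGij : G i j = g i ⬝ᵥ g j - (∑ m, g i m) * (∑ m, g j m) / M := by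
    simpa [hG, hP] using centering_mulVec_dotProduct (g i) (g j)
  have hSL : 0 ≤ SL * BL ^ 2 := mul_nonneg (hSH.trans hSLH).le (sq_nonneg BL)
  have hSH' : 0 ≤ SH * BH ^ 2 := mul_nonneg hSH.le (sq_nonneg BH)
  have hlow : ∀ f, |f| ≤ fL → trace ((S f)⁻¹ * S' i f * (S f)⁻¹ * S' j f)
      = ((4 * π ^ 2 * wL * G i j * f ^ 2 : ℝ) : ℂ) := fun f hf => by
    rw [hSlow f hf, hS'low i f hf, hS'low j f hf, hD, hD, hwL, hγL, hGij]
    simpa using trace_whittle_band (hv1 f) (g i) (g j) hSL hSwLpos f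
  have hhigh : ∀ f, fL < |f| → |f| ≤ fH → trace ((S f)⁻¹ * S' i f * (S f)⁻¹ * S' j f)
      = ((4 * π ^ 2 * wH * G i j * f ^ 2 : ℝ) : ℂ) := fun f hf₁ hf₂ => by
    rw [hShigh f hf₁ hf₂, hS'high i f hf₁ hf₂, hS'high j f hf₁ hf₂, hD, hD, hwH, hγH, hGij]
    simpa using trace_whittle_band (hv1 f) (g i) (g j) hSH' hSwHpos f
  rw [integral_eq_of_eqOn_two_band_mul_sq hfL.le hfLH.le (fun f hf => hlow f hf.le) hhigh]
  push_cast
  ring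

/-- **Two-band Whittle Fisher-information rate identity** (general per-band gains
`B_L, B_H > 0`): the half-integral over `[−f_H, f_H]` of the Whittle trace term of
the compressed cross-spectral density equals
`(4π²/3)(f_L³ w_L + (f_H³ − f_L³) w_H) G_{ij}`. -/
theorem two_band_whittle_FI_rate
    (d M : ℕ) (hd : 1 ≤ d) (hM : 2 ≤ M)
    (p : EuclideanSpace ℝ (Fin d)) (ps : Fin M → EuclideanSpace ℝ (Fin d))
    (hps : ∀ m, p ≠ ps m) (c : ℝ) (hc : 0 < c)
    (τ : Fin M → ℝ) (hτ : ∀ m, τ m = ‖p - ps m‖ / c)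
    (g : Fin d → Fin M → ℝ)
    (hg : ∀ i m, g i m = (p i - ps m i) / (c * ‖p - ps m‖))
    (P : Matrix (Fin M) (Fin M) ℝ)
    (hP : P = (1 : Matrix (Fin M) (Fin M) ℝ) - ((M : ℝ))⁻¹ • vecMulVec 1 1)
    (G : Fin d → Fin d → ℝ)
    (hG : ∀ i j, G i j = P.mulVec (g i) ⬝ᵥ P.mulVec (g j))
    (v : ℝ → Fin M → ℂ)
    (hv : ∀ f m, v f m = Complex.exp (-(2 * π * Complex.I * f * τ m)))
    (fL fH SL SH N0 BL BH lam : ℝ)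
    (hfL : 0 < fL) (hfLH : fL < fH)
    (hSH : 0 < SH) (hSLH : SH < SL) (hN0 : 0 < N0)
    (hBL : 0 < BL) (hBH : 0 < BH) (hlam : 0 ≤ lam)
    (SwL SwH : ℝ)
    (hSwL : SwL = BL ^ 2 * N0 + lam * BL) (hSwLpos : 0 < SwL)
    (hSwH : SwH = BH ^ 2 * N0 + lam * BH) (hSwHpos : 0 < SwH)
    (γL γH : ℝ) (hγL : γL = SL * BL ^ 2 / SwL) (hγH : γH = SH * BH ^ 2 / SwH)
    (wL wH : ℝ)
    (hwL : wL = 2 * M * γL ^ 2 / (1 + M * γL))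
    (hwH : wH = 2 * M * γH ^ 2 / (1 + M * γH))
    (D : Fin d → Matrix (Fin M) (Fin M) ℂ)
    (hD : ∀ i, D i = Matrix.diagonal fun m => (g i m : ℂ))
    (S : ℝ → Matrix (Fin M) (Fin M) ℂ)
    (S' : Fin d → ℝ → Matrix (Fin M) (Fin M) ℂ)
    (hSlow : ∀ f : ℝ, |f| ≤ fL →
      S f = ((SL * BL ^ 2 : ℝ) : ℂ) • vecMulVec (v f) (star (v f))
        + ((SwL : ℝ) : ℂ) • (1 : Matrix (Fin M) (Fin M) ℂ))
    (hShigh : ∀ f : ℝ, fL < |f| → |f| ≤ fH →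
      S f = ((SH * BH ^ 2 : ℝ) : ℂ) • vecMulVec (v f) (star (v f))
        + ((SwH : ℝ) : ℂ) • (1 : Matrix (Fin M) (Fin M) ℂ))
    (hS'low : ∀ (i : Fin d) (f : ℝ), |f| ≤ fL →
      S' i f = (2 * π * Complex.I * f * (SL * BL ^ 2)) •
        (vecMulVec (v f) (star (v f)) * D i - D i * vecMulVec (v f) (star (v f))))
    (hS'high : ∀ (i : Fin d) (f : ℝ), fL < |f| → |f| ≤ fH →
      S' i f = (2 * π * Complex.I * f * (SH * BH ^ 2)) •
        (vecMulVec (v f) (star (v f)) * D i - D i * vecMulVec (v f) (star (v f)))) :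
    ∀ i j : Fin d,
      (1 / 2 : ℂ) * ∫ f in (-fH)..fH,
          Matrix.trace ((S f)⁻¹ * S' i f * (S f)⁻¹ * S' j f)
        = (((4 * π ^ 2 / 3) * (fL ^ 3 * wL + (fH ^ 3 - fL ^ 3) * wH) * G i j : ℝ) : ℂ) :=
  two_band_whittle_FI_rate_general d M hM τ g P hP G hG v hv fL fH SL SH BL BH hfL hfLH hSH hSLH SwL
    SwH hSwLpos hSwHpos γL γH hγL hγH wL wH hwL hwH D hD S S' hSlow hShigh hS'low hS'high
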